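/- Let L be one of the logics tΣ_{∞,λ}[μ] or tΠ_{∞,λ}[μ] over a finite relational vocabulary τ, for an ordinal λ ≥ 0 and cardinal μ ≥ 0, and let ⊛ be a quantifier-free sum-like binary operation on τ-structures. If A₁, A₁', A₂, A₂' are τ-structures such that A₁ and A₁' satisfy the same L sentences and A₂ and A₂' satisfy the same L sentences, then A₁ ⊛ A₂ and A₁' ⊛ A₂' satisfy the same L sentences. In particular, the L theory of A₁ ⊛ A₂ is determined by the L theories of A₁ and A₂. -/

import Mathlib

namespace FV

open Cardinal

/-- A (finite) relational vocabulary: a type of relation symbols with arities. -/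
structure Vocab : Type 1 where
  Rel : Type
  arity : Rel → ℕ

/-- A structure over a relational vocabulary. -/
structure Struc (τ : Vocab) : Type 1 where
  carrier : Type
  rel : ∀ R : τ.Rel, (Fin (τ.arity R) → carrier) → Prop

/-- Infinitary formulae in negation normal form over a relational vocabulary,
with free variables among `Fin n`. -/
inductive Formula (τ : Vocab) : ℕ → Type 1 where
  | tru {n : ℕ} : Formula τ n
  | fls {n : ℕ} : Formula τ n
  | rel {n : ℕ} (R : τ.Rel) (ts : Fin (τ.arity R) → Fin n) : Formula τ n
  | nrel {n : ℕ} (R : τ.Rel) (ts : Fin (τ.arity R) → Fin n) : Formula τ n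
  | eq {n : ℕ} (i j : Fin n) : Formula τ n
  | neq {n : ℕ} (i j : Fin n) : Formula τ n
  | iAnd {n : ℕ} (I : Type) (f : I → Formula τ n) : Formula τ n
  | iOr {n : ℕ} (I : Type) (f : I → Formula τ n) : Formula τ n
  | ex {n : ℕ} (φ : Formula τ (n+1)) : Formula τ n
  | all {n : ℕ} (φ : Formula τ (n+1)) : Formula τ n

/-- Binary conjunction (a conjunction of arity 2). -/
def Formula.and {τ : Vocab} {n : ℕ} (φ ψ : Formula τ n) : Formula τ n :=
  Formula.iAnd Bool (fun b => if b then φ else ψ)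

/-- Binary disjunction (a disjunction of arity 2). -/
def Formula.or {τ : Vocab} {n : ℕ} (φ ψ : Formula τ n) : Formula τ n :=
  Formula.iOr Bool (fun b => if b then φ else ψ)

/-- Quantifier-free formulae (in NNF, with finite conjunctions/disjunctions). -/
inductive IsQF {τ : Vocab} : ∀ {n : ℕ}, Formula τ n → Prop where
  | tru {n : ℕ} : IsQF (Formula.tru (τ := τ) (n := n))
  | fls {n : ℕ} : IsQF (Formula.fls (τ := τ) (n := n))
  | rel {n : ℕ} (R : τ.Rel) (ts : Fin (τ.arity R) → Fin n) : IsQF (Formula.rel R ts)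
  | nrel {n : ℕ} (R : τ.Rel) (ts : Fin (τ.arity R) → Fin n) : IsQF (Formula.nrel R ts)
  | eq {n : ℕ} (i j : Fin n) : IsQF (Formula.eq (τ := τ) i j)
  | neq {n : ℕ} (i j : Fin n) : IsQF (Formula.neq (τ := τ) i j)
  | iAnd {n : ℕ} (I : Type) (hI : Finite I) (f : I → Formula τ n)
      (h : ∀ i, IsQF (f i)) : IsQF (Formula.iAnd I f)
  | iOr {n : ℕ} (I : Type) (hI : Finite I) (f : I → Formula τ n)
      (h : ∀ i, IsQF (f i)) : IsQF (Formula.iOr I f)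

/-- Satisfaction of a formula in a structure under an assignment. -/
def Sat {τ : Vocab} (A : Struc τ) : ∀ {n : ℕ}, Formula τ n → (Fin n → A.carrier) → Prop
  | _, .tru, _ => True
  | _, .fls, _ => False
  | _, .rel R ts, v => A.rel R (fun i => v (ts i))
  | _, .nrel R ts, v => ¬ A.rel R (fun i => v (ts i))
  | _, .eq i j, v => v i = v j
  | _, .neq i j, v => v i ≠ v j
  | _, .iAnd I f, v => ∀ i : I, Sat A (f i) v
  | _, .iOr I f, v => ∃ i : I, Sat A (f i) v
  | _, .ex φ, v => ∃ a, Sat A φ (Fin.snoc v a)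
  | _, .all φ, v => ∀ a, Sat A φ (Fin.snoc v a)

/-- The empty assignment. -/
def emptyA {α : Type} : Fin 0 → α := fun i => i.elim0

/-- The (quantifier) rank of a formula: the supremum of the number of quantifiers
on any root-to-leaf path of its parse tree. -/
noncomputable def rank {τ : Vocab} : ∀ {n : ℕ}, Formula τ n → Cardinal
  | _, .iAnd I f => ⨆ i : I, rank (f i)
  | _, .iOr I f => ⨆ i : I, rank (f i)
  | _, .ex φ => rank φ + 1
  | _, .all φ => rank φ + 1
  | _, _ => 0

/-- The size of a formula (number of nodes of its parse tree), as a cardinal. -/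
noncomputable def sizeC {τ : Vocab} : ∀ {n : ℕ}, Formula τ n → Cardinal
  | _, .iAnd I f => 1 + Cardinal.sum (fun i : I => sizeC (f i))
  | _, .iOr I f => 1 + Cardinal.sum (fun i : I => sizeC (f i))
  | _, .ex φ => 1 + sizeC φ
  | _, .all φ => 1 + sizeC φ
  | _, _ => 1

mutual
/-- The class tΣ_{κ,λ} of formulae. -/
inductive TSigma (τ : Vocab) (κ : Cardinal) : Ordinal → ∀ {n : ℕ}, Formula τ n → Prop where
  | qf {n : ℕ} {φ : Formula τ n} : IsQF φ → TSigma τ κ 0 φ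
  | conj {n : ℕ} {lam : Ordinal} (I : Type) (f : I → Formula τ n)
      (hI : Cardinal.mk I < κ) (lam' : I → Ordinal) (hlt : ∀ i, lam' i < lam)
      (h : ∀ i, TPi τ κ (lam' i) (f i)) : TSigma τ κ lam (Formula.iAnd I f)
  | ex {n : ℕ} {lam : Ordinal} {φ : Formula τ (n+1)} :
      TSigma τ κ lam φ → TSigma τ κ lam (Formula.ex φ)

/-- The class tΠ_{κ,λ} of formulae. -/
inductive TPi (τ : Vocab) (κ : Cardinal) : Ordinal → ∀ {n : ℕ}, Formula τ n → Prop where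
  | qf {n : ℕ} {φ : Formula τ n} : IsQF φ → TPi τ κ 0 φ
  | disj {n : ℕ} {lam : Ordinal} (I : Type) (f : I → Formula τ n)
      (hI : Cardinal.mk I < κ) (lam' : I → Ordinal) (hlt : ∀ i, lam' i < lam)
      (h : ∀ i, TSigma τ κ (lam' i) (f i)) : TPi τ κ lam (Formula.iOr I f)
  | all {n : ℕ} {lam : Ordinal} {φ : Formula τ (n+1)} :
      TPi τ κ lam φ → TPi τ κ lam (Formula.all φ)
end

/-- tΣ_{∞,λ}: union of tΣ_{κ,λ} over all infinite cardinals κ. -/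
def TSigmaInf (τ : Vocab) (lam : Ordinal) {n : ℕ} (φ : Formula τ n) : Prop :=
  ∃ κ : Cardinal, ℵ₀ ≤ κ ∧ TSigma τ κ lam φ

/-- tΠ_{∞,λ}: union of tΠ_{κ,λ} over all infinite cardinals κ. -/
def TPiInf (τ : Vocab) (lam : Ordinal) {n : ℕ} (φ : Formula τ n) : Prop :=
  ∃ κ : Cardinal, ℵ₀ ≤ κ ∧ TPi τ κ lam φ

/-- The λ-fold exponential `tower` function (taking suprema at limits). -/
noncomputable def towerC (κ : Cardinal) (l : Ordinal) : Cardinal :=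
  Ordinal.limitRecOn l κ (fun _ ih => (2 : Cardinal) ^ ih)
    (fun o _ ih => ⨆ i : {o' : Ordinal // o' < o}, ih i.1 i.2)

/-- The n-fold exponential `tower` function on naturals. -/
def towerN : ℕ → Cardinal → Cardinal
  | 0, k => k
  | n+1, k => (2 : Cardinal) ^ towerN n k

open Classical in
/-- ρ(κ,λ) = tower(λ,κ) if κ > ω, else ω. -/
noncomputable def rho (κ : Cardinal) (lam : Ordinal) : Cardinal :=
  if ℵ₀ < κ then towerC κ lam else ℵ₀

/-- ∞-propositional formulae over a set `V` of propositional variables. -/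
inductive PropForm (V : Type) : Type 1 where
  | var (v : V) : PropForm V
  | not (p : PropForm V) : PropForm V
  | iAnd (I : Type) (f : I → PropForm V) : PropForm V
  | iOr (I : Type) (f : I → PropForm V) : PropForm V

/-- Binary conjunction of propositional formulae. -/
def PropForm.and {V : Type} (p q : PropForm V) : PropForm V :=
  PropForm.iAnd Bool (fun b => if b then p else q)

/-- Binary disjunction of propositional formulae. -/
def PropForm.or {V : Type} (p q : PropForm V) : PropForm V :=
  PropForm.iOr Bool (fun b => if b then p else q)

/-- Evaluation of an ∞-propositional formula under an assignment. -/
def PropForm.eval {V : Type} (ζ : V → Bool) : PropForm V → Prop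
  | .var v => ζ v = true
  | .not p => ¬ PropForm.eval ζ p
  | .iAnd _ f => ∀ i, PropForm.eval ζ (f i)
  | .iOr _ f => ∃ i, PropForm.eval ζ (f i)

/-- Negation-free ∞-propositional formulae. -/
inductive PropForm.NegFree {V : Type} : PropForm V → Prop where
  | var (v : V) : PropForm.NegFree (.var v)
  | iAnd (I : Type) (f : I → PropForm V) (h : ∀ i, PropForm.NegFree (f i)) :
      PropForm.NegFree (.iAnd I f)
  | iOr (I : Type) (f : I → PropForm V) (h : ∀ i, PropForm.NegFree (f i)) :
      PropForm.NegFree (.iOr I f)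

/-- Finitary (ordinary) propositional formulae. -/
inductive PropForm.Finitary {V : Type} : PropForm V → Prop where
  | var (v : V) : PropForm.Finitary (.var v)
  | not (p : PropForm V) (h : PropForm.Finitary p) : PropForm.Finitary (.not p)
  | iAnd (I : Type) (hI : Finite I) (f : I → PropForm V)
      (h : ∀ i, PropForm.Finitary (f i)) : PropForm.Finitary (.iAnd I f)
  | iOr (I : Type) (hI : Finite I) (f : I → PropForm V)
      (h : ∀ i, PropForm.Finitary (f i)) : PropForm.Finitary (.iOr I f)

/-- Size of an ∞-propositional formula. -/
noncomputable def PropForm.size {V : Type} : PropForm V → Cardinal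
  | .var _ => 1
  | .not p => 1 + PropForm.size p
  | .iAnd I f => 1 + Cardinal.sum (fun i : I => PropForm.size (f i))
  | .iOr I f => 1 + Cardinal.sum (fun i : I => PropForm.size (f i))

/-- A reduction sequence `D(x̄₁, x̄₂) = (Δ₁(x̄₁), Δ₂(x̄₂), β)` over τ. -/
structure RedSeq (τ : Vocab) (r₁ r₂ : ℕ) : Type 1 where
  I : Type
  Δ₁ : I → Formula τ r₁
  Δ₂ : I → Formula τ r₂
  β : PropForm (I × Fin 2)

/-- `(A₁, A₂, ā₁, ā₂)` is a model of the reduction sequence `D`. -/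
def RedSeq.Models {τ : Vocab} {r₁ r₂ : ℕ} (D : RedSeq τ r₁ r₂) (A₁ A₂ : Struc τ)
    (a₁ : Fin r₁ → A₁.carrier) (a₂ : Fin r₂ → A₂.carrier) : Prop :=
  ∃ ζ : D.I × Fin 2 → Bool, D.β.eval ζ ∧
    (∀ i : D.I, (ζ (i, 0) = true ↔ Sat A₁ (D.Δ₁ i) a₁)) ∧
    (∀ i : D.I, (ζ (i, 1) = true ↔ Sat A₂ (D.Δ₂ i) a₂))

/-- Size of a reduction sequence. -/
noncomputable def RedSeq.size {τ : Vocab} {r₁ r₂ : ℕ} (D : RedSeq τ r₁ r₂) : Cardinal :=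
  Cardinal.sum (fun i : D.I => sizeC (D.Δ₁ i)) +
    Cardinal.sum (fun i : D.I => sizeC (D.Δ₂ i)) + D.β.size

/-- The vocabulary τ̱ = τ ∪ {P} for a new unary predicate P (represented by `none`). -/
def annotV (τ : Vocab) : Vocab where
  Rel := Option τ.Rel
  arity := fun R => match R with
    | none => 1
    | some S => τ.arity S

/-- The annotated disjoint union of two τ-structures: their disjoint union,
expanded by interpreting the new unary predicate P as the universe of the first. -/
def adu {τ : Vocab} (A₁ A₂ : Struc τ) : Struc (annotV τ) where
  carrier := A₁.carrier ⊕ A₂.carrier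
  rel := fun R => match R with
    | none => fun v => (v ⟨0, Nat.one_pos⟩).isLeft = true
    | some S => fun v =>
        (∃ w : Fin (τ.arity S) → A₁.carrier, A₁.rel S w ∧ v = fun i => Sum.inl (w i)) ∨
        (∃ w : Fin (τ.arity S) → A₂.carrier, A₂.rel S w ∧ v = fun i => Sum.inr (w i))

/-- `D` is a Feferman–Vaught decomposition of `φ(x̄₁,x̄₂)` over annotated disjoint union. -/
def FVDecompADU {τ : Vocab} {r₁ r₂ : ℕ} (φ : Formula (annotV τ) (r₁ + r₂))
    (D : RedSeq τ r₁ r₂) : Prop :=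
  ∀ (A₁ A₂ : Struc τ) (a₁ : Fin r₁ → A₁.carrier) (a₂ : Fin r₂ → A₂.carrier),
    Sat (adu A₁ A₂) φ (Fin.append (fun i => Sum.inl (a₁ i)) (fun i => Sum.inr (a₂ i)))
      ↔ D.Models A₁ A₂ a₁ a₂

/-- `D` is a Feferman–Vaught decomposition of the sentence `φ` over the binary operation `op`. -/
def FVDecompOp {τ : Vocab} (op : Struc τ → Struc τ → Struc τ) (φ : Formula τ 0)
    (D : RedSeq τ 0 0) : Prop :=
  ∀ A₁ A₂ : Struc τ, Sat (op A₁ A₂) φ emptyA ↔ D.Models A₁ A₂ emptyA emptyA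

/-- A quantifier-free scalar (σ,τ)-interpretation. -/
structure QFInterp (σ τ : Vocab) : Type 1 where
  xiU : Formula σ 1
  xiR : ∀ R : τ.Rel, Formula σ (τ.arity R)
  hU : IsQF xiU
  hR : ∀ R : τ.Rel, IsQF (xiR R)

/-- The τ-structure interpreted in a σ-structure by a quantifier-free interpretation. -/
def QFInterp.app {σ τ : Vocab} (Ξ : QFInterp σ τ) (A : Struc σ) : Struc τ where
  carrier := { a : A.carrier // Sat A Ξ.xiU (fun _ => a) }
  rel := fun R v => Sat A (Ξ.xiR R) (fun i => (v i).1)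

/-- The quantifier-free sum-like binary operation defined by a (τ̱,τ)-interpretation. -/
def sumLike {τ : Vocab} (Ξ : QFInterp (annotV τ) τ) (A₁ A₂ : Struc τ) : Struc τ :=
  Ξ.app (adu A₁ A₂)


/-- Relabelling of free variables. -/
def relabel {τ : Vocab} : ∀ {m n : ℕ}, (Fin m → Fin n) → Formula τ m → Formula τ n
  | _, _, _, .tru => .tru
  | _, _, _, .fls => .fls
  | _, _, g, .rel R ts => .rel R (fun i => g (ts i))
  | _, _, g, .nrel R ts => .nrel R (fun i => g (ts i))
  | _, _, g, .eq i j => .eq (g i) (g j)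
  | _, _, g, .neq i j => .neq (g i) (g j)
  | _, _, g, .iAnd I f => .iAnd I (fun i => relabel g (f i))
  | _, _, g, .iOr I f => .iOr I (fun i => relabel g (f i))
  | _, _, g, .ex φ => .ex (relabel (Fin.snoc (fun i => Fin.castSucc (g i)) (Fin.last _)) φ)
  | _, _, g, .all φ => .all (relabel (Fin.snoc (fun i => Fin.castSucc (g i)) (Fin.last _)) φ)

/-- Negation, in negation normal form. -/
def nnfNeg {τ : Vocab} : ∀ {n : ℕ}, Formula τ n → Formula τ n
  | _, .tru => .fls
  | _, .fls => .tru
  | _, .rel R ts => .nrel R ts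
  | _, .nrel R ts => .rel R ts
  | _, .eq i j => .neq i j
  | _, .neq i j => .eq i j
  | _, .iAnd I f => .iOr I (fun i => nnfNeg (f i))
  | _, .iOr I f => .iAnd I (fun i => nnfNeg (f i))
  | _, .ex φ => .all (nnfNeg φ)
  | _, .all φ => .ex (nnfNeg φ)

/-- Finite conjunction of a tuple of formulae. -/
def finAnd {τ : Vocab} {n : ℕ} : ∀ {r : ℕ}, (Fin r → Formula τ n) → Formula τ n
  | 0, _ => .tru
  | r+1, f => (finAnd (fun i => f (Fin.castSucc i))).and (f (Fin.last r))

/-- A block of `k` existential quantifiers. -/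
def exBlock {τ : Vocab} : ∀ (k : ℕ) {r : ℕ}, Formula τ (r + k) → Formula τ r
  | 0, _, φ => φ
  | k+1, _, φ => exBlock k (Formula.ex φ)

/-- A block of `k` universal quantifiers. -/
def allBlock {τ : Vocab} : ∀ (k : ℕ) {r : ℕ}, Formula τ (r + k) → Formula τ r
  | 0, _, φ => φ
  | k+1, _, φ => allBlock k (Formula.all φ)

mutual
/-- The class tΣ_{(n,k)}: tΣ_n formulae all of whose quantifier blocks have length exactly k. -/
inductive SigNK (τ : Vocab) (k : ℕ) : ℕ → ∀ {r : ℕ}, Formula τ r → Prop where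
  | qf {r : ℕ} {φ : Formula τ r} : IsQF φ → SigNK τ k 0 φ
  | blk {r n : ℕ} (hn : 0 < n) (I : Type) (hI : Finite I) (f : I → Formula τ (r + k))
      (n' : I → ℕ) (hlt : ∀ i, n' i < n) (h : ∀ i, PiNK τ k (n' i) (f i)) :
      SigNK τ k n (exBlock k (Formula.iAnd I f))
/-- The class tΠ_{(n,k)}: tΠ_n formulae all of whose quantifier blocks have length exactly k. -/
inductive PiNK (τ : Vocab) (k : ℕ) : ℕ → ∀ {r : ℕ}, Formula τ r → Prop where
  | qf {r : ℕ} {φ : Formula τ r} : IsQF φ → PiNK τ k 0 φ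
  | blk {r n : ℕ} (hn : 0 < n) (I : Type) (hI : Finite I) (f : I → Formula τ (r + k))
      (n' : I → ℕ) (hlt : ∀ i, n' i < n) (h : ∀ i, SigNK τ k (n' i) (f i)) :
      PiNK τ k n (allBlock k (Formula.iOr I f))
end

/-- Partial isomorphism condition on a pair of tuples. -/
def PIso {τ : Vocab} (A₁ A₂ : Struc τ) (r : ℕ)
    (a₁ : Fin r → A₁.carrier) (a₂ : Fin r → A₂.carrier) : Prop :=
  (∀ i j : Fin r, a₁ i = a₁ j ↔ a₂ i = a₂ j) ∧
  (∀ (R : τ.Rel) (ts : Fin (τ.arity R) → Fin r),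
      A₁.rel R (fun l => a₁ (ts l)) ↔ A₂.rel R (fun l => a₂ (ts l)))

/-- The Duplicator has a winning strategy in the (n,k)-prefix game on the ordered pair
((A₁,ā₁),(A₂,ā₂)): in odd rounds the Spoiler picks a k-tuple in A₁ (and the Duplicator
answers in A₂), in even rounds the roles of the structures are swapped; the Duplicator wins
a play if the chosen tuples collectively form a partial isomorphism. -/
def DWinPrefix {τ : Vocab} (k : ℕ) : ℕ → (A₁ A₂ : Struc τ) → (r : ℕ) →
    (Fin r → A₁.carrier) → (Fin r → A₂.carrier) → Prop
  | 0, A₁, A₂, r, a₁, a₂ => PIso A₁ A₂ r a₁ a₂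
  | n+1, A₁, A₂, r, a₁, a₂ =>
      ∀ b₁ : Fin k → A₁.carrier, ∃ b₂ : Fin k → A₂.carrier,
        DWinPrefix k n A₂ A₁ (r + k) (Fin.append a₂ b₂) (Fin.append a₁ b₁)

/-- The Duplicator has a winning strategy in the (n,k)-tree-prefix game on the set
{(A₁,ā₁),(A₂,ā₂)}: in the first round the Spoiler picks a k-tuple in either structure, and
thereafter in the structure in which the Duplicator chose in the previous round. -/
def DWinTree {τ : Vocab} (k : ℕ) : ℕ → (A₁ A₂ : Struc τ) → (r : ℕ) →
    (Fin r → A₁.carrier) → (Fin r → A₂.carrier) → Prop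
  | 0, A₁, A₂, r, a₁, a₂ => PIso A₁ A₂ r a₁ a₂
  | n+1, A₁, A₂, r, a₁, a₂ =>
      (∀ b₁ : Fin k → A₁.carrier, ∃ b₂ : Fin k → A₂.carrier,
        DWinPrefix k n A₂ A₁ (r + k) (Fin.append a₂ b₂) (Fin.append a₁ b₁)) ∧
      (∀ b₂ : Fin k → A₂.carrier, ∃ b₁ : Fin k → A₁.carrier,
        DWinPrefix k n A₁ A₂ (r + k) (Fin.append a₁ b₁) (Fin.append a₂ b₂))

/-- (A₁,ā₁) ⇛_{(n,k)} (A₂,ā₂) : every tΣ_{(n,k)} formula true of (A₁,ā₁) is true of (A₂,ā₂). -/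
def TransferNK {τ : Vocab} (n k : ℕ) (A₁ A₂ : Struc τ) (r : ℕ)
    (a₁ : Fin r → A₁.carrier) (a₂ : Fin r → A₂.carrier) : Prop :=
  ∀ φ : Formula τ r, SigNK τ k n φ → Sat A₁ φ a₁ → Sat A₂ φ a₂

/-- (A₁,ā₁) ≡_{(n,k)} (A₂,ā₂) : agreement on all tΣ_{(n,k)} formulae. -/
def EquivNK {τ : Vocab} (n k : ℕ) (A₁ A₂ : Struc τ) (r : ℕ)
    (a₁ : Fin r → A₁.carrier) (a₂ : Fin r → A₂.carrier) : Prop :=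
  ∀ φ : Formula τ r, SigNK τ k n φ → (Sat A₁ φ a₁ ↔ Sat A₂ φ a₂)

namespace QFInterp

variable {σ τ : Vocab}

/-- The universe formula ξ_U applied at variable `i`. -/
def uAt (Ξ : QFInterp σ τ) {n : ℕ} (i : Fin n) : Formula σ n :=
  relabel (fun _ : Fin 1 => i) Ξ.xiU

/-- The universe formula ξ_U applied at the last (just-quantified) variable. -/
def uLast (Ξ : QFInterp σ τ) {n : ℕ} : Formula σ (n+1) :=
  Ξ.uAt (Fin.last n)

/-- Close a pending quantifier-block guard. -/
def closeG {n : ℕ} : Option (Bool × Formula σ n) → Formula σ n → Formula σ n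
  | none, r => r
  | some (true, g), r => g.and r
  | some (false, g), r => g.or r

/-- Block-wise translation Ξ(φ) of a formula under a quantifier-free interpretation,
with an accumulator carrying the pending universe-guard of the current quantifier block:
Ξ(R(z̄)) = ξ_R(z̄) ∧ ⋀ᵢ ξ_U(zᵢ); Ξ(¬R(z̄)) = ¬ξ_R(z̄) ∧ ⋀ᵢ ξ_U(zᵢ) (¬ξ_R in NNF);
Ξ commutes with conjunctions and disjunctions; Ξ(∃x̄ ⋀ᵢφᵢ) = ∃x̄(⋀ⱼ ξ_U(xⱼ) ∧ ⋀ᵢΞ(φᵢ));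
Ξ(∀x̄ ⋁ᵢφᵢ) = ∀x̄((⋁ⱼ ¬ξ_U(xⱼ)) ∨ ⋁ᵢΞ(φᵢ)) (¬ξ_U in NNF). -/
def trA (Ξ : QFInterp σ τ) : ∀ {n : ℕ}, Option (Bool × Formula σ n) → Formula τ n → Formula σ n
  | _, mode, .tru => closeG mode .tru
  | _, mode, .fls => closeG mode .fls
  | _, mode, .rel R ts =>
      closeG mode ((relabel ts (Ξ.xiR R)).and (finAnd (fun i => Ξ.uAt (ts i))))
  | _, mode, .nrel R ts =>
      closeG mode ((nnfNeg (relabel ts (Ξ.xiR R))).and (finAnd (fun i => Ξ.uAt (ts i))))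
  | _, mode, .eq i j => closeG mode ((Formula.eq i j).and ((Ξ.uAt i).and (Ξ.uAt j)))
  | _, mode, .neq i j => closeG mode ((Formula.neq i j).and ((Ξ.uAt i).and (Ξ.uAt j)))
  | _, some (true, g), .iAnd I f =>
      .iAnd (Option I) (fun o => o.elim g (fun i => Ξ.trA none (f i)))
  | _, some (false, g), .iOr I f =>
      .iOr (Option I) (fun o => o.elim g (fun i => Ξ.trA none (f i)))
  | _, mode, .iAnd I f => closeG mode (.iAnd I (fun i => Ξ.trA none (f i)))
  | _, mode, .iOr I f => closeG mode (.iOr I (fun i => Ξ.trA none (f i)))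
  | _, some (true, g), .ex φ =>
      .ex (Ξ.trA (some (true, (relabel Fin.castSucc g).and Ξ.uLast)) φ)
  | _, some (false, g), .all φ =>
      .all (Ξ.trA (some (false, (relabel Fin.castSucc g).or (nnfNeg Ξ.uLast))) φ)
  | _, mode, .ex φ => closeG mode (.ex (Ξ.trA (some (true, Ξ.uLast)) φ))
  | _, mode, .all φ => closeG mode (.all (Ξ.trA (some (false, nnfNeg Ξ.uLast)) φ))

/-- The translation Ξ(φ) of a formula. -/
def translate (Ξ : QFInterp σ τ) {n : ℕ} (φ : Formula τ n) : Formula σ n :=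
  Ξ.trA none φ

/-- The size |Ξ| of an interpretation: the sum of the sizes of its formulae. -/
noncomputable def size [Fintype τ.Rel] (Ξ : QFInterp σ τ) : Cardinal :=
  sizeC Ξ.xiU + ∑ R : τ.Rel, sizeC (Ξ.xiR R)

end QFInterp

/-!
Evaluated in `A₁ ⊛ A₂` at an assignment whose values are spread over the two summands, a
tΣ_{∞,λ} formula is equivalent to a disjunction `⋁ₖ δₖ(ā₁) ∧ εₖ(ā₂)` with `δₖ` read in `A₁` and
`εₖ` in `A₂`, all of them in tΣ_{∞,λ} and of no larger quantifier rank. This goes by induction on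
the formula. Atoms pull back along Ξ to quantifier-free formulae over the annotated disjoint union,
which split atom by atom. A quantifier ranges over the elements of `A₁` and of `A₂` satisfying
`ξ_U`; this guard splits as well and is conjoined below the existential prefix. A conjunction of
tΠ formulae, each the negation of such a disjunction, distributes back into one disjunction; that
costs arity but not alternation level. Π formulae are handled through their negations. For
sentences, the disjunction transfers the equivalence of the summands to the ⊛-products.
-/

section Formulas

variable {τ : Vocab}

theorem sat_and {A : Struc τ} {n : ℕ} (φ ψ : Formula τ n) (v : Fin n → A.carrier) :
    Sat A (φ.and ψ) v ↔ Sat A φ v ∧ Sat A ψ v := by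
  simp [Formula.and, Sat, Bool.forall_bool, and_comm]

theorem sat_nnfNeg {A : Struc τ} {n : ℕ} (φ : Formula τ n) :
    ∀ v : Fin n → A.carrier, Sat A (nnfNeg φ) v ↔ ¬ Sat A φ v := by
  induction φ <;> simp [nnfNeg, Sat, *]

theorem sat_relabel {A : Struc τ} {m : ℕ} (φ : Formula τ m) :
    ∀ {n : ℕ} (g : Fin m → Fin n) (v : Fin n → A.carrier),
      Sat A (relabel g φ) v ↔ Sat A φ (v ∘ g) := by
  induction φ with
  | iAnd I f ih => simp [relabel, Sat, ih]
  | iOr I f ih => simp [relabel, Sat, ih]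
  | ex φ ih | all φ ih =>
    intro n g v
    have hg : ∀ a, (Fin.snoc v a ∘ fun i => (g i).castSucc) = v ∘ g :=
      fun a => funext fun i => Fin.snoc_castSucc (α := fun _ => A.carrier) ..
    simp [relabel, Sat, ih, Fin.comp_snoc, hg]
  | _ => simp [relabel, Sat]

theorem isQF_nnfNeg {n : ℕ} {φ : Formula τ n} (h : IsQF φ) : IsQF (nnfNeg φ) := by
  induction h with
  | iAnd I hI f _ ih => exact .iOr I hI _ ih
  | iOr I hI f _ ih => exact .iAnd I hI _ ih
  | _ => simp only [nnfNeg]; constructor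

theorem isQF_relabel {m n : ℕ} (g : Fin m → Fin n) {φ : Formula τ m} (h : IsQF φ) :
    IsQF (relabel g φ) := by
  induction h generalizing n with
  | iAnd I hI f _ ih => exact .iAnd I hI _ fun i => ih i g
  | iOr I hI f _ ih => exact .iOr I hI _ fun i => ih i g
  | _ => simp only [relabel]; constructor

theorem isQF_and {n : ℕ} {φ ψ : Formula τ n} (hφ : IsQF φ) (hψ : IsQF ψ) : IsQF (φ.and ψ) :=
  .iAnd _ inferInstance _ fun b => by cases b <;> assumption

theorem rank_nnfNeg {n : ℕ} (φ : Formula τ n) : rank (nnfNeg φ) = rank φ := by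
  induction φ <;> simp [nnfNeg, rank, *]

theorem rank_eq_zero_of_isQF {n : ℕ} {φ : Formula τ n} (h : IsQF φ) : rank φ = 0 := by
  induction h with
  | iAnd I hI f _ ih | iOr I hI f _ ih => exact le_antisymm (ciSup_le' fun i => (ih i).le) zero_le
  | _ => simp [rank]

theorem rank_le_rank_iAnd {I : Type} {n : ℕ} (f : I → Formula τ n) (i : I) :
    rank (f i) ≤ rank (.iAnd I f) :=
  le_ciSup Cardinal.bddAbove_of_small i

theorem rank_le_rank_iOr {I : Type} {n : ℕ} (f : I → Formula τ n) (i : I) :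
    rank (f i) ≤ rank (.iOr I f) :=
  le_ciSup Cardinal.bddAbove_of_small i

/-- `γ ∧ φ`, with `γ` pushed below the existential prefix of `φ` into its outermost conjunction,
so that for quantifier-free `γ` membership of `φ` in tΣ_{κ,λ} is preserved. -/
def pushAnd : ∀ {n : ℕ}, Formula τ n → Formula τ n → Formula τ n
  | _, γ, .ex φ => .ex (pushAnd (relabel Fin.castSucc γ) φ)
  | _, γ, .iAnd I f => .iAnd (Option I) fun o => o.elim γ f
  | _, γ, φ => γ.and φ

theorem sat_pushAnd {A : Struc τ} {n : ℕ} (γ φ : Formula τ n) (v : Fin n → A.carrier) :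
    Sat A (pushAnd γ φ) v ↔ Sat A γ v ∧ Sat A φ v := by
  induction φ with
  | ex φ ih => simp [pushAnd, Sat, ih, sat_relabel]
  | iAnd I f ih => simp [pushAnd, Sat, Option.forall]
  | _ => simp [pushAnd, sat_and]

theorem rank_pushAnd_le {n : ℕ} {γ : Formula τ n} (hγ : IsQF γ) (φ : Formula τ n) :
    rank (pushAnd γ φ) ≤ rank φ := by
  induction φ with
  | ex φ ih => simpa [pushAnd, rank] using ih (isQF_relabel _ hγ)
  | iAnd I f ih =>
    refine ciSup_le' fun o => ?_
    cases o with
    | none => simp [rank_eq_zero_of_isQF hγ]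
    | some i => exact rank_le_rank_iAnd f i
  | _ =>
    refine ciSup_le' fun b => ?_
    cases b <;> simp [rank_eq_zero_of_isQF hγ]

theorem isQF_pushAnd {n : ℕ} {γ φ : Formula τ n} (hγ : IsQF γ) (hφ : IsQF φ) :
    IsQF (pushAnd γ φ) := by
  cases φ with
  | iAnd I f =>
    cases hφ with
    | iAnd I hI f h => exact .iAnd _ inferInstance _ fun o => by cases o <;> simp [hγ, h]
  | ex φ => cases hφ
  | _ => exact isQF_and hγ hφ

end Formulas

section Hierarchy

variable {τ : Vocab}

mutual
theorem TSigma.mono {κ κ' : Cardinal} (hκ : κ ≤ κ') :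
    ∀ {lam : Ordinal} {n : ℕ} {φ : Formula τ n}, TSigma τ κ lam φ → TSigma τ κ' lam φ
  | _, _, _, .qf h => .qf h
  | _, _, _, .conj I f hI lam' hlt h =>
    .conj I f (hI.trans_le hκ) lam' hlt fun i => TPi.mono hκ (h i)
  | _, _, _, .ex h => .ex (TSigma.mono hκ h)

theorem TPi.mono {κ κ' : Cardinal} (hκ : κ ≤ κ') :
    ∀ {lam : Ordinal} {n : ℕ} {φ : Formula τ n}, TPi τ κ lam φ → TPi τ κ' lam φ
  | _, _, _, .qf h => .qf h
  | _, _, _, .disj I f hI lam' hlt h =>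
    .disj I f (hI.trans_le hκ) lam' hlt fun i => TSigma.mono hκ (h i)
  | _, _, _, .all h => .all (TPi.mono hκ h)
end

mutual
theorem TSigma.nnfNeg {κ : Cardinal} :
    ∀ {lam : Ordinal} {n : ℕ} {φ : Formula τ n}, TSigma τ κ lam φ → TPi τ κ lam (nnfNeg φ)
  | _, _, _, .qf h => .qf (isQF_nnfNeg h)
  | _, _, _, .conj I _ hI lam' hlt h => .disj I _ hI lam' hlt fun i => TPi.nnfNeg (h i)
  | _, _, _, .ex h => .all (TSigma.nnfNeg h)

theorem TPi.nnfNeg {κ : Cardinal} :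
    ∀ {lam : Ordinal} {n : ℕ} {φ : Formula τ n}, TPi τ κ lam φ → TSigma τ κ lam (nnfNeg φ)
  | _, _, _, .qf h => .qf (isQF_nnfNeg h)
  | _, _, _, .disj I _ hI lam' hlt h => .conj I _ hI lam' hlt fun i => TSigma.nnfNeg (h i)
  | _, _, _, .all h => .ex (TPi.nnfNeg h)
end

theorem TSigma.pushAnd {κ : Cardinal} (hκ : ℵ₀ ≤ κ) {lam : Ordinal} {n : ℕ}
    {γ φ : Formula τ n} (hγ : IsQF γ) (hφ : TSigma τ κ lam φ) :
    TSigma τ κ lam (pushAnd γ φ) := by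
  induction φ generalizing lam with
  | ex φ ih =>
    cases hφ with
    | qf h => cases h
    | ex hφ => exact .ex (ih (isQF_relabel _ hγ) hφ)
  | iAnd I f =>
    cases hφ with
    | qf h => exact .qf (isQF_pushAnd hγ h)
    | conj I f hI lam' hlt hf =>
      rcases eq_zero_or_pos lam with rfl | hlam
      · have : IsEmpty I := ⟨fun i => (hlt i).not_ge zero_le⟩
        exact .qf (isQF_pushAnd hγ (.iAnd I inferInstance f isEmptyElim))
      refine .conj _ _ ?_ (fun o => o.elim 0 lam') (Option.rec hlam hlt) (Option.rec (.qf hγ) hf)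
      rw [Cardinal.mk_option]
      exact Cardinal.add_lt_of_lt hκ hI (Cardinal.one_lt_aleph0.trans_le hκ)
  | _ =>
    cases hφ with
    | qf h => exact .qf (isQF_pushAnd hγ h)

theorem tSigmaInf_iAnd {J : Type} {n : ℕ} {f : J → Formula τ n} {ℓ : J → Ordinal}
    {lam : Ordinal} (hlt : ∀ j, ℓ j < lam) (hf : ∀ j, TPiInf τ (ℓ j) (f j)) :
    TSigmaInf τ lam (.iAnd J f) := by
  choose κ hκ hfκ using hf
  set K := Order.succ (ℵ₀ ⊔ Cardinal.mk J ⊔ ⨆ j, κ j)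
  have hle : ℵ₀ ⊔ Cardinal.mk J ⊔ ⨆ j, κ j ≤ K := Order.le_succ _
  refine ⟨K, le_sup_left.trans (le_sup_left.trans hle), .conj J f ?_ ℓ hlt fun j => ?_⟩
  · exact (le_sup_right.trans le_sup_left).trans_lt (Order.lt_succ_of_not_isMax (not_isMax _))
  · exact (hfκ j).mono (((le_ciSup Cardinal.bddAbove_of_small j).trans le_sup_right).trans hle)

/-- Membership in tΣ_{∞,λ}[r]. -/
def TSigmaRk (lam : Ordinal) (r : Cardinal) {n : ℕ} (φ : Formula τ n) : Prop :=
  TSigmaInf τ lam φ ∧ rank φ ≤ r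

end Hierarchy

structure SplitDNF (τ : Vocab) (n₁ n₂ : ℕ) : Type 1 where
  K : Type
  left : K → Formula τ n₁
  right : K → Formula τ n₂

namespace SplitDNF

variable {τ : Vocab} {n₁ n₂ : ℕ}

def Holds (D : SplitDNF τ n₁ n₂) (A₁ A₂ : Struc τ) (a₁ : Fin n₁ → A₁.carrier)
    (a₂ : Fin n₂ → A₂.carrier) : Prop :=
  ∃ k, Sat A₁ (D.left k) a₁ ∧ Sat A₂ (D.right k) a₂

def Forall (C : ∀ {n : ℕ}, Formula τ n → Prop) (D : SplitDNF τ n₁ n₂) : Prop :=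
  ∀ k, C (D.left k) ∧ C (D.right k)

def IsFiniteQF (D : SplitDNF τ n₁ n₂) : Prop :=
  Finite D.K ∧ D.Forall IsQF

def bot : SplitDNF τ n₁ n₂ := ⟨Empty, Empty.elim, Empty.elim⟩

def ofLeft (φ : Formula τ n₁) : SplitDNF τ n₁ n₂ := ⟨Unit, fun _ => φ, fun _ => .tru⟩

def ofRight (φ : Formula τ n₂) : SplitDNF τ n₁ n₂ := ⟨Unit, fun _ => .tru, fun _ => φ⟩

def sup (D E : SplitDNF τ n₁ n₂) : SplitDNF τ n₁ n₂ :=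
  ⟨D.K ⊕ E.K, Sum.elim D.left E.left, Sum.elim D.right E.right⟩

def sigma {I : Type} (D : I → SplitDNF τ n₁ n₂) : SplitDNF τ n₁ n₂ :=
  ⟨Σ i, (D i).K, fun k => (D k.1).left k.2, fun k => (D k.1).right k.2⟩

/-- The negation `⋀ₖ (¬ left k ∨ ¬ right k)`, distributed back into a `SplitDNF`: a choice
`S k` of the disjunct to keep in each conjunct. -/
def compl (D : SplitDNF τ n₁ n₂) : SplitDNF τ n₁ n₂ where
  K := D.K → Bool
  left S := .iAnd {k // S k = true} fun k => nnfNeg (D.left k)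
  right S := .iAnd {k // S k = false} fun k => nnfNeg (D.right k)

def exLeft (D : SplitDNF τ (n₁ + 1) n₂) : SplitDNF τ n₁ n₂ :=
  ⟨D.K, fun k => .ex (D.left k), D.right⟩

def exRight (D : SplitDNF τ n₁ (n₂ + 1)) : SplitDNF τ n₁ n₂ :=
  ⟨D.K, D.left, fun k => .ex (D.right k)⟩

def inf (G D : SplitDNF τ n₁ n₂) : SplitDNF τ n₁ n₂ :=
  ⟨G.K × D.K, fun k => pushAnd (G.left k.1) (D.left k.2),
    fun k => pushAnd (G.right k.1) (D.right k.2)⟩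

section Holds

variable {A₁ A₂ : Struc τ} {a₁ : Fin n₁ → A₁.carrier} {a₂ : Fin n₂ → A₂.carrier}

@[simp] theorem bot_holds : ¬ (bot : SplitDNF τ n₁ n₂).Holds A₁ A₂ a₁ a₂ := by
  simp [Holds, bot]

@[simp] theorem ofLeft_holds (φ : Formula τ n₁) :
    (ofLeft φ : SplitDNF τ n₁ n₂).Holds A₁ A₂ a₁ a₂ ↔ Sat A₁ φ a₁ := by
  simp [Holds, ofLeft, Sat]

@[simp] theorem ofRight_holds (φ : Formula τ n₂) :
    (ofRight φ : SplitDNF τ n₁ n₂).Holds A₁ A₂ a₁ a₂ ↔ Sat A₂ φ a₂ := by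
  simp [Holds, ofRight, Sat]

@[simp] theorem sup_holds (D E : SplitDNF τ n₁ n₂) :
    (D.sup E).Holds A₁ A₂ a₁ a₂ ↔ D.Holds A₁ A₂ a₁ a₂ ∨ E.Holds A₁ A₂ a₁ a₂ := by
  simp [Holds, sup]

@[simp] theorem sigma_holds {I : Type} (D : I → SplitDNF τ n₁ n₂) :
    (sigma D).Holds A₁ A₂ a₁ a₂ ↔ ∃ i, (D i).Holds A₁ A₂ a₁ a₂ := by
  simp [Holds, sigma]

@[simp] theorem compl_holds (D : SplitDNF τ n₁ n₂) :
    D.compl.Holds A₁ A₂ a₁ a₂ ↔ ¬ D.Holds A₁ A₂ a₁ a₂ := by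
  simp only [Holds, compl, Sat, sat_nnfNeg, Subtype.forall, not_exists, not_and_or,
    ← forall_and]
  refine (Classical.skolem (p := fun k b =>
    (b = true → ¬Sat A₁ (D.left k) a₁) ∧ (b = false → ¬Sat A₂ (D.right k) a₂))).symm.trans ?_
  simp [Bool.exists_bool, or_comm]

@[simp] theorem exLeft_holds (D : SplitDNF τ (n₁ + 1) n₂) :
    D.exLeft.Holds A₁ A₂ a₁ a₂ ↔ ∃ b, D.Holds A₁ A₂ (Fin.snoc a₁ b) a₂ := by
  simp only [Holds, exLeft, Sat]
  grind

@[simp] theorem exRight_holds (D : SplitDNF τ n₁ (n₂ + 1)) :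
    D.exRight.Holds A₁ A₂ a₁ a₂ ↔ ∃ b, D.Holds A₁ A₂ a₁ (Fin.snoc a₂ b) := by
  simp only [Holds, exRight, Sat]
  grind

@[simp] theorem inf_holds (G D : SplitDNF τ n₁ n₂) :
    (G.inf D).Holds A₁ A₂ a₁ a₂ ↔ G.Holds A₁ A₂ a₁ a₂ ∧ D.Holds A₁ A₂ a₁ a₂ := by
  simp only [Holds, inf, sat_pushAnd, Prod.exists]
  grind

theorem holds_congr {C : ∀ {n : ℕ}, Formula τ n → Prop} {D : SplitDNF τ n₁ n₂} (hD : D.Forall C)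
    {B₁ B₂ : Struc τ} {b₁ : Fin n₁ → B₁.carrier} {b₂ : Fin n₂ → B₂.carrier}
    (h₁ : ∀ φ : Formula τ n₁, C φ → (Sat A₁ φ a₁ ↔ Sat B₁ φ b₁))
    (h₂ : ∀ φ : Formula τ n₂, C φ → (Sat A₂ φ a₂ ↔ Sat B₂ φ b₂)) :
    D.Holds A₁ A₂ a₁ a₂ ↔ D.Holds B₁ B₂ b₁ b₂ :=
  exists_congr fun k => and_congr (h₁ _ (hD k).1) (h₂ _ (hD k).2)

end Holds

theorem Forall.mono {C C' : ∀ {n : ℕ}, Formula τ n → Prop}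
    (hC : ∀ {n} (φ : Formula τ n), C φ → C' φ)
    {D : SplitDNF τ n₁ n₂} (hD : D.Forall C) : D.Forall C' :=
  fun k => ⟨hC _ (hD k).1, hC _ (hD k).2⟩

theorem Forall.sup {C : ∀ {n : ℕ}, Formula τ n → Prop} {D E : SplitDNF τ n₁ n₂}
    (hD : D.Forall C) (hE : E.Forall C) : (D.sup E).Forall C
  | .inl k => hD k
  | .inr k => hE k

theorem IsFiniteQF.bot : (bot : SplitDNF τ n₁ n₂).IsFiniteQF :=
  ⟨inferInstanceAs (Finite Empty), fun k => k.elim⟩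

theorem IsFiniteQF.ofLeft {φ : Formula τ n₁} (hφ : IsQF φ) :
    (ofLeft φ : SplitDNF τ n₁ n₂).IsFiniteQF :=
  ⟨inferInstanceAs (Finite Unit), fun _ => ⟨hφ, .tru⟩⟩

theorem IsFiniteQF.ofRight {φ : Formula τ n₂} (hφ : IsQF φ) :
    (ofRight φ : SplitDNF τ n₁ n₂).IsFiniteQF :=
  ⟨inferInstanceAs (Finite Unit), fun _ => ⟨.tru, hφ⟩⟩

theorem IsFiniteQF.sup {D E : SplitDNF τ n₁ n₂} (hD : D.IsFiniteQF) (hE : E.IsFiniteQF) :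
    (D.sup E).IsFiniteQF :=
  have := hD.1; have := hE.1
  ⟨inferInstanceAs (Finite (D.K ⊕ E.K)), hD.2.sup hE.2⟩

theorem IsFiniteQF.sigma {I : Type} [Finite I] {D : I → SplitDNF τ n₁ n₂}
    (hD : ∀ i, (D i).IsFiniteQF) : (SplitDNF.sigma D).IsFiniteQF :=
  have := fun i => (hD i).1
  ⟨inferInstanceAs (Finite (Σ i, (D i).K)), fun k => (hD k.1).2 k.2⟩

theorem IsFiniteQF.compl {D : SplitDNF τ n₁ n₂} (hD : D.IsFiniteQF) : D.compl.IsFiniteQF :=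
  have := hD.1
  ⟨inferInstanceAs (Finite (D.K → Bool)), fun _ =>
    ⟨.iAnd _ inferInstance _ fun k => isQF_nnfNeg (hD.2 k).1,
      .iAnd _ inferInstance _ fun k => isQF_nnfNeg (hD.2 k).2⟩⟩

theorem IsFiniteQF.forall_tSigmaRk {D : SplitDNF τ n₁ n₂} (hD : D.IsFiniteQF) (r : Cardinal) :
    D.Forall (TSigmaRk 0 r) :=
  hD.2.mono fun _ h => ⟨⟨ℵ₀, le_rfl, .qf h⟩, (rank_eq_zero_of_isQF h).trans_le zero_le⟩

variable {lam : Ordinal} {r : Cardinal}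

theorem Forall.exLeft {D : SplitDNF τ (n₁ + 1) n₂} (hD : D.Forall (TSigmaRk lam r)) :
    D.exLeft.Forall (TSigmaRk lam (r + 1)) := fun k =>
  have ⟨⟨⟨κ, hκ, hl⟩, hlr⟩, hr, hrr⟩ := hD k
  ⟨⟨⟨κ, hκ, .ex hl⟩, add_le_add_left hlr 1⟩, hr, hrr.trans (le_self_add)⟩

theorem Forall.exRight {D : SplitDNF τ n₁ (n₂ + 1)} (hD : D.Forall (TSigmaRk lam r)) :
    D.exRight.Forall (TSigmaRk lam (r + 1)) := fun k =>
  have ⟨⟨hl, hlr⟩, ⟨κ, hκ, hr⟩, hrr⟩ := hD k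
  ⟨⟨hl, hlr.trans le_self_add⟩, ⟨κ, hκ, .ex hr⟩, add_le_add_left hrr 1⟩

theorem Forall.inf {G D : SplitDNF τ n₁ n₂} (hD : D.Forall (TSigmaRk lam r))
    (hG : G.Forall IsQF) : (G.inf D).Forall (TSigmaRk lam r) := by
  have pushAnd_mem : ∀ {n} {γ φ : Formula τ n}, IsQF γ → TSigmaRk lam r φ →
      TSigmaRk lam r (pushAnd γ φ) := fun hγ ⟨⟨κ, hκ, hφ⟩, hr⟩ =>
    ⟨⟨κ, hκ, hφ.pushAnd hκ hγ⟩, (rank_pushAnd_le hγ _).trans hr⟩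
  exact fun k => ⟨pushAnd_mem (hG k.1).1 (hD k.2).1, pushAnd_mem (hG k.1).2 (hD k.2).2⟩

theorem forall_compl {D : SplitDNF τ n₁ n₂} (ℓ : D.K → Ordinal) (hℓ : ∀ k, ℓ k < lam)
    (hD : ∀ k, TSigmaRk (ℓ k) r (D.left k) ∧ TSigmaRk (ℓ k) r (D.right k)) :
    D.compl.Forall (TSigmaRk lam r) := by
  have iAnd_mem : ∀ {n} {J : Type} (f : J → Formula τ n) (ℓ : J → Ordinal), (∀ j, ℓ j < lam) →
      (∀ j, TSigmaRk (ℓ j) r (f j)) → TSigmaRk lam r (.iAnd J fun j => nnfNeg (f j)) :=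
    fun f ℓ hℓ hf => ⟨tSigmaInf_iAnd hℓ fun j =>
        have ⟨⟨κ, hκ, h⟩, _⟩ := hf j; ⟨κ, hκ, h.nnfNeg⟩,
      ciSup_le' fun j => (rank_nnfNeg _).trans_le (hf j).2⟩
  exact fun S => ⟨iAnd_mem _ (fun k => ℓ k.1) (fun k => hℓ k.1) fun k => (hD k.1).1,
    iAnd_mem _ (fun k => ℓ k.1) (fun k => hℓ k.1) fun k => (hD k.1).2⟩

end SplitDNF

section AnnotatedUnion

theorem exists_and_map_comp_eq_inl_comp_iff {ι α β γ δ : Type*} {f : α → γ} {g : β → δ}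
    {q : ι → α ⊕ β} {P : (ι → γ) → Prop} :
    (∃ w, P w ∧ Sum.map f g ∘ q = Sum.inl ∘ w) ↔ ∃ t, q = Sum.inl ∘ t ∧ P (f ∘ t) := by
  refine ⟨fun ⟨w, hP, h⟩ => ?_, fun ⟨t, hq, hP⟩ => ⟨f ∘ t, hP, hq ▸ rfl⟩⟩
  have : ∀ i, ∃ j, q i = .inl j ∧ f j = w i := fun i => by
    have := congrFun h i
    rcases hq : q i with j | j <;> simp_all
  choose t ht using this
  refine ⟨t, funext fun i => (ht i).1, ?_⟩
  rwa [show f ∘ t = w from funext fun i => (ht i).2]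

theorem exists_and_map_comp_eq_inr_comp_iff {ι α β γ δ : Type*} {f : α → γ} {g : β → δ}
    {q : ι → α ⊕ β} {P : (ι → δ) → Prop} :
    (∃ w, P w ∧ Sum.map f g ∘ q = Sum.inr ∘ w) ↔ ∃ t, q = Sum.inr ∘ t ∧ P (g ∘ t) := by
  refine ⟨fun ⟨w, hP, h⟩ => ?_, fun ⟨t, hq, hP⟩ => ⟨g ∘ t, hP, hq ▸ rfl⟩⟩
  have : ∀ i, ∃ j, q i = .inr j ∧ g j = w i := fun i => by
    have := congrFun h i
    rcases hq : q i with j | j <;> simp_all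
  choose t ht using this
  refine ⟨t, funext fun i => (ht i).1, ?_⟩
  rwa [show g ∘ t = w from funext fun i => (ht i).2]

variable {τ : Vocab} {m n₁ n₂ : ℕ}

def SplitDNF.RepresentsAdu (p : Fin m → Fin n₁ ⊕ Fin n₂) (ψ : Formula (annotV τ) m)
    (D : SplitDNF τ n₁ n₂) : Prop :=
  ∀ (A₁ A₂ : Struc τ) a₁ a₂, Sat (adu A₁ A₂) ψ (Sum.map a₁ a₂ ∘ p) ↔ D.Holds A₁ A₂ a₁ a₂

open SplitDNF

theorem exists_splitDNF_adu_rel (R : (annotV τ).Rel) (ts : Fin ((annotV τ).arity R) → Fin m)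
    (p : Fin m → Fin n₁ ⊕ Fin n₂) :
    ∃ D : SplitDNF τ n₁ n₂, D.IsFiniteQF ∧ D.RepresentsAdu p (.rel R ts) := by
  cases R with
  | none =>
    rcases h : p (ts ⟨0, Nat.one_pos⟩) with j | j
    · exact ⟨ofLeft .tru, .ofLeft .tru, fun A₁ A₂ a₁ a₂ => by simp [Sat, adu, h]⟩
    · exact ⟨bot, .bot, fun A₁ A₂ a₁ a₂ => by simp [Sat, adu, h]⟩
  | some S =>
    refine ⟨(sigma fun t : {t // p ∘ ts = Sum.inl ∘ t} => ofLeft (.rel S t.1)).sup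
      (sigma fun t : {t // p ∘ ts = Sum.inr ∘ t} => ofRight (.rel S t.1)),
      (IsFiniteQF.sigma fun _ => .ofLeft (.rel _ _)).sup
        (IsFiniteQF.sigma fun _ => .ofRight (.rel _ _)),
      fun A₁ A₂ a₁ a₂ => ?_⟩
    simp only [sup_holds, sigma_holds, ofLeft_holds, ofRight_holds, Subtype.exists, exists_prop]
    change (∃ w, A₁.rel S w ∧ Sum.map a₁ a₂ ∘ (p ∘ ts) = Sum.inl ∘ w) ∨
        (∃ w, A₂.rel S w ∧ Sum.map a₁ a₂ ∘ (p ∘ ts) = Sum.inr ∘ w) ↔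
      (∃ t, p ∘ ts = Sum.inl ∘ t ∧ A₁.rel S (a₁ ∘ t)) ∨
        (∃ t, p ∘ ts = Sum.inr ∘ t ∧ A₂.rel S (a₂ ∘ t))
    exact or_congr exists_and_map_comp_eq_inl_comp_iff exists_and_map_comp_eq_inr_comp_iff

theorem exists_splitDNF_adu_eq (i j : Fin m) (p : Fin m → Fin n₁ ⊕ Fin n₂) :
    ∃ D : SplitDNF τ n₁ n₂, D.IsFiniteQF ∧ D.RepresentsAdu p (.eq i j) := by
  have hsat : ∀ (A₁ A₂ : Struc τ) a₁ a₂, Sat (adu A₁ A₂) (.eq i j) (Sum.map a₁ a₂ ∘ p) ↔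
      Sum.map a₁ a₂ (p i) = Sum.map a₁ a₂ (p j) := fun _ _ _ _ => Iff.rfl
  rcases hi : p i with i' | i' <;> rcases hj : p j with j' | j'
  · exact ⟨ofLeft (.eq i' j'), .ofLeft (.eq _ _), fun _ _ _ _ => by rw [hsat]; simp [Sat, hi, hj]⟩
  · exact ⟨bot, .bot, fun _ _ _ _ => by simp [hsat, hi, hj]⟩
  · exact ⟨bot, .bot, fun _ _ _ _ => by simp [hsat, hi, hj]⟩
  · exact ⟨ofRight (.eq i' j'), .ofRight (.eq _ _), fun _ _ _ _ => by rw [hsat]; simp [Sat, hi, hj]⟩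

theorem exists_splitDNF_adu {ψ : Formula (annotV τ) m} (hψ : IsQF ψ)
    (p : Fin m → Fin n₁ ⊕ Fin n₂) :
    ∃ D : SplitDNF τ n₁ n₂, D.IsFiniteQF ∧ D.RepresentsAdu p ψ := by
  induction hψ with
  | tru => exact ⟨ofLeft .tru, .ofLeft .tru, fun _ _ _ _ => by simp [Sat]⟩
  | fls => exact ⟨bot, .bot, fun _ _ _ _ => by simp [Sat]⟩
  | rel R ts => exact exists_splitDNF_adu_rel R ts p
  | nrel R ts =>
    obtain ⟨D, hD, h⟩ := exists_splitDNF_adu_rel R ts p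
    exact ⟨D.compl, hD.compl, fun A₁ A₂ a₁ a₂ => by rw [compl_holds, ← h A₁ A₂ a₁ a₂]; rfl⟩
  | eq i j => exact exists_splitDNF_adu_eq i j p
  | neq i j =>
    obtain ⟨D, hD, h⟩ := exists_splitDNF_adu_eq i j p
    exact ⟨D.compl, hD.compl, fun A₁ A₂ a₁ a₂ => by rw [compl_holds, ← h A₁ A₂ a₁ a₂]; rfl⟩
  | iAnd I hI f _ ih =>
    choose D hD h using ih
    exact ⟨(sigma fun i => (D i).compl).compl, (IsFiniteQF.sigma fun i => (hD i).compl).compl,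
      fun A₁ A₂ a₁ a₂ => by simp [Sat, fun i => h i A₁ A₂ a₁ a₂]⟩
  | iOr I hI f _ ih =>
    choose D hD h using ih
    exact ⟨sigma D, .sigma hD, fun A₁ A₂ a₁ a₂ => by simp [Sat, fun i => h i A₁ A₂ a₁ a₂]⟩

end AnnotatedUnion

theorem QFInterp.exists_isQF_sat_app_iff {σ τ : Vocab} (Ξ : QFInterp σ τ) {n : ℕ}
    {φ : Formula τ n} (hφ : IsQF φ) :
    ∃ ψ : Formula σ n, IsQF ψ ∧ ∀ (B : Struc σ) (v : Fin n → (Ξ.app B).carrier),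
      Sat (Ξ.app B) φ v ↔ Sat B ψ (Subtype.val ∘ v) := by
  induction hφ with
  | tru => exact ⟨.tru, .tru, fun _ _ => Iff.rfl⟩
  | fls => exact ⟨.fls, .fls, fun _ _ => Iff.rfl⟩
  | rel R ts =>
    refine ⟨relabel ts (Ξ.xiR R), isQF_relabel ts (Ξ.hR R), fun B v => ?_⟩
    rw [sat_relabel]
    rfl
  | nrel R ts =>
    refine ⟨nnfNeg (relabel ts (Ξ.xiR R)), isQF_nnfNeg (isQF_relabel ts (Ξ.hR R)), fun B v => ?_⟩
    rw [sat_nnfNeg, sat_relabel]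
    rfl
  | eq i j => exact ⟨.eq i j, .eq i j, fun _ _ => Subtype.ext_iff⟩
  | neq i j => exact ⟨.neq i j, .neq i j, fun _ _ => not_congr Subtype.ext_iff⟩
  | iAnd I hI f _ ih =>
    choose ψ hψ h using ih
    exact ⟨.iAnd I ψ, .iAnd I hI ψ hψ, fun B v => forall_congr' fun i => h i B v⟩
  | iOr I hI f _ ih =>
    choose ψ hψ h using ih
    exact ⟨.iOr I ψ, .iOr I hI ψ hψ, fun B v => exists_congr fun i => h i B v⟩


section SumLike

variable {τ : Vocab} (Ξ : QFInterp (annotV τ) τ) {m n₁ n₂ : ℕ}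

open SplitDNF

def SplitDNF.Represents (p : Fin m → Fin n₁ ⊕ Fin n₂) (φ : Formula τ m)
    (D : SplitDNF τ n₁ n₂) : Prop :=
  ∀ (A₁ A₂ : Struc τ) a₁ a₂ (v : Fin m → (sumLike Ξ A₁ A₂).carrier),
    Subtype.val ∘ v = Sum.map a₁ a₂ ∘ p → (Sat (sumLike Ξ A₁ A₂) φ v ↔ D.Holds A₁ A₂ a₁ a₂)

def Splits (lam : Ordinal) (r : Cardinal) (p : Fin m → Fin n₁ ⊕ Fin n₂) (φ : Formula τ m) :
    Prop :=
  ∃ D : SplitDNF τ n₁ n₂, D.Forall (TSigmaRk lam r) ∧ D.Represents Ξ p φ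

variable {Ξ}

theorem Splits.mono {lam : Ordinal} {r r' : Cardinal} (hr : r ≤ r')
    {p : Fin m → Fin n₁ ⊕ Fin n₂} {φ : Formula τ m} (h : Splits Ξ lam r p φ) :
    Splits Ξ lam r' p φ :=
  have ⟨D, hD, hrep⟩ := h
  ⟨D, hD.mono fun _ h => ⟨h.1, h.2.trans hr⟩, hrep⟩

theorem splits_of_isQF {φ : Formula τ m} (hφ : IsQF φ) (r : Cardinal)
    (p : Fin m → Fin n₁ ⊕ Fin n₂) : Splits Ξ 0 r p φ := by
  obtain ⟨ψ, hψ, hsat⟩ := Ξ.exists_isQF_sat_app_iff hφ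
  obtain ⟨D, hD, hrep⟩ := exists_splitDNF_adu hψ p
  exact ⟨D, hD.forall_tSigmaRk r, fun A₁ A₂ a₁ a₂ v hv =>
    (hsat (adu A₁ A₂) v).trans (by rw [hv]; exact hrep A₁ A₂ a₁ a₂)⟩

def snocLeft (p : Fin m → Fin n₁ ⊕ Fin n₂) : Fin (m + 1) → Fin (n₁ + 1) ⊕ Fin n₂ :=
  Fin.snoc (Sum.map Fin.castSucc id ∘ p) (.inl (Fin.last n₁))

def snocRight (p : Fin m → Fin n₁ ⊕ Fin n₂) : Fin (m + 1) → Fin n₁ ⊕ Fin (n₂ + 1) :=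
  Fin.snoc (Sum.map id Fin.castSucc ∘ p) (.inr (Fin.last n₂))

theorem map_comp_snocLeft {α β : Type*} (p : Fin m → Fin n₁ ⊕ Fin n₂) (a₁ : Fin n₁ → α)
    (a₂ : Fin n₂ → β) (b : α) :
    Sum.map (Fin.snoc a₁ b) a₂ ∘ snocLeft p = Fin.snoc (Sum.map a₁ a₂ ∘ p) (.inl b) := by
  simp [snocLeft, Fin.comp_snoc, ← Function.comp_assoc, Sum.map_comp_map]

theorem map_comp_snocRight {α β : Type*} (p : Fin m → Fin n₁ ⊕ Fin n₂) (a₁ : Fin n₁ → α)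
    (a₂ : Fin n₂ → β) (b : β) :
    Sum.map a₁ (Fin.snoc a₂ b) ∘ snocRight p = Fin.snoc (Sum.map a₁ a₂ ∘ p) (.inr b) := by
  simp [snocRight, Fin.comp_snoc, ← Function.comp_assoc, Sum.map_comp_map]

theorem val_comp_snoc_inl {A₁ A₂ : Struc τ} {p : Fin m → Fin n₁ ⊕ Fin n₂} {a₁ : Fin n₁ → A₁.carrier}
    {a₂ : Fin n₂ → A₂.carrier} {v : Fin m → (sumLike Ξ A₁ A₂).carrier}
    (hv : Subtype.val ∘ v = Sum.map a₁ a₂ ∘ p) (b : A₁.carrier) (h) :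
    Subtype.val ∘ Fin.snoc v (⟨.inl b, h⟩ : (sumLike Ξ A₁ A₂).carrier) =
      Sum.map (Fin.snoc a₁ b) a₂ ∘ snocLeft p := by
  rw [map_comp_snocLeft, ← hv]
  exact Fin.comp_snoc _ _ _

theorem val_comp_snoc_inr {A₁ A₂ : Struc τ} {p : Fin m → Fin n₁ ⊕ Fin n₂} {a₁ : Fin n₁ → A₁.carrier}
    {a₂ : Fin n₂ → A₂.carrier} {v : Fin m → (sumLike Ξ A₁ A₂).carrier}
    (hv : Subtype.val ∘ v = Sum.map a₁ a₂ ∘ p) (b : A₂.carrier) (h) :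
    Subtype.val ∘ Fin.snoc v (⟨.inr b, h⟩ : (sumLike Ξ A₁ A₂).carrier) =
      Sum.map a₁ (Fin.snoc a₂ b) ∘ snocRight p := by
  rw [map_comp_snocRight, ← hv]
  exact Fin.comp_snoc _ _ _

variable (Ξ) in
theorem exists_splitDNF_xiU_inl (n₁ n₂ : ℕ) :
    ∃ U : SplitDNF τ (n₁ + 1) n₂, U.IsFiniteQF ∧ ∀ (A₁ A₂ : Struc τ) a₁ a₂ (b : A₁.carrier),
      Sat (adu A₁ A₂) Ξ.xiU (fun _ => .inl b) ↔ U.Holds A₁ A₂ (Fin.snoc a₁ b) a₂ := by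
  obtain ⟨U, hU, hrep⟩ := exists_splitDNF_adu Ξ.hU
    (fun _ => .inl (Fin.last n₁) : Fin 1 → Fin (n₁ + 1) ⊕ Fin n₂)
  refine ⟨U, hU, fun A₁ A₂ a₁ a₂ b => ?_⟩
  rw [← hrep]
  exact Iff.of_eq (congrArg _ (funext fun _ =>
    congrArg Sum.inl (Fin.snoc_last (α := fun _ => A₁.carrier) ..).symm))

variable (Ξ) in
theorem exists_splitDNF_xiU_inr (n₁ n₂ : ℕ) :
    ∃ U : SplitDNF τ n₁ (n₂ + 1), U.IsFiniteQF ∧ ∀ (A₁ A₂ : Struc τ) a₁ a₂ (b : A₂.carrier),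
      Sat (adu A₁ A₂) Ξ.xiU (fun _ => .inr b) ↔ U.Holds A₁ A₂ a₁ (Fin.snoc a₂ b) := by
  obtain ⟨U, hU, hrep⟩ := exists_splitDNF_adu Ξ.hU
    (fun _ => .inr (Fin.last n₂) : Fin 1 → Fin n₁ ⊕ Fin (n₂ + 1))
  refine ⟨U, hU, fun A₁ A₂ a₁ a₂ b => ?_⟩
  rw [← hrep]
  exact Iff.of_eq (congrArg _ (funext fun _ =>
    congrArg Sum.inr (Fin.snoc_last (α := fun _ => A₂.carrier) ..).symm))

theorem Splits.ex {lam : Ordinal} {r : Cardinal} {p : Fin m → Fin n₁ ⊕ Fin n₂}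
    {ψ : Formula τ (m + 1)} (hL : Splits Ξ lam r (snocLeft p) ψ)
    (hR : Splits Ξ lam r (snocRight p) ψ) : Splits Ξ lam (r + 1) p (.ex ψ) := by
  obtain ⟨DL, hDL, hL⟩ := hL
  obtain ⟨DR, hDR, hR⟩ := hR
  obtain ⟨UL, hUL, huL⟩ := exists_splitDNF_xiU_inl Ξ n₁ n₂
  obtain ⟨UR, hUR, huR⟩ := exists_splitDNF_xiU_inr Ξ n₁ n₂
  refine ⟨((UL.inf DL).exLeft).sup (UR.inf DR).exRight, (hDL.inf hUL.2).exLeft.sup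
    (hDR.inf hUR.2).exRight, fun A₁ A₂ a₁ a₂ v hv => ?_⟩
  have hsL := fun b h => hL A₁ A₂ _ a₂ _ (val_comp_snoc_inl hv b h)
  have hsR := fun b h => hR A₁ A₂ a₁ _ _ (val_comp_snoc_inr hv b h)
  show (∃ c : {x // Sat (adu A₁ A₂) Ξ.xiU fun _ => x}, Sat _ ψ (Fin.snoc v c)) ↔ _
  simp only [sup_holds, exLeft_holds, exRight_holds, inf_holds]
  rw [Subtype.exists]
  exact Sum.exists.trans (or_congr
    (exists_congr fun b => (exists_prop_congr (hsL b) (huL A₁ A₂ a₁ a₂ b)).trans exists_prop)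
    (exists_congr fun b => (exists_prop_congr (hsR b) (huR A₁ A₂ a₁ a₂ b)).trans exists_prop))

theorem splits_iAnd {lam : Ordinal} {r : Cardinal} {p : Fin m → Fin n₁ ⊕ Fin n₂} {I : Type}
    {f g : I → Formula τ m} {lam' : I → Ordinal} (hlt : ∀ i, lam' i < lam)
    (hg : ∀ i, Splits Ξ (lam' i) r p (g i))
    (hfg : ∀ i (B : Struc τ) v, Sat B (f i) v ↔ ¬ Sat B (g i) v) :
    Splits Ξ lam r p (.iAnd I f) := by
  choose D hD hrep using hg
  refine ⟨(sigma D).compl, forall_compl (fun k => lam' k.1) (fun k => hlt k.1)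
    (fun k => hD k.1 k.2), fun A₁ A₂ a₁ a₂ v hv => ?_⟩
  simp only [compl_holds, sigma_holds, not_exists]
  exact forall_congr' fun i => (hfg i _ v).trans (not_congr (hrep i A₁ A₂ a₁ a₂ v hv))

theorem splits_of_tSigma_of_tPi {κ : Cardinal} (φ : Formula τ m) :
    ∀ {lam : Ordinal} {r : Cardinal} {n₁ n₂ : ℕ} (p : Fin m → Fin n₁ ⊕ Fin n₂), rank φ ≤ r →
      (TSigma τ κ lam φ → Splits Ξ lam r p φ) ∧ (TPi τ κ lam φ → Splits Ξ lam r p (nnfNeg φ)) := by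
  induction φ with
  | ex ψ ih =>
    refine fun p hr => ⟨(fun | .qf h => nomatch h | .ex h => ?_), (fun | .qf h => nomatch h)⟩
    exact (((ih (snocLeft p) le_rfl).1 h).ex ((ih (snocRight p) le_rfl).1 h)).mono hr
  | all ψ ih =>
    refine fun p hr => ⟨(fun | .qf h => nomatch h), (fun | .qf h => nomatch h | .all h => ?_)⟩
    exact (((ih (snocLeft p) le_rfl).2 h).ex ((ih (snocRight p) le_rfl).2 h)).mono hr
  | iAnd I f ih =>
    refine fun p hr => ⟨(fun | .qf h => splits_of_isQF h _ p | .conj _ _ _ lam' hlt h => ?_),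
      (fun | .qf h => splits_of_isQF (isQF_nnfNeg h) _ p)⟩
    refine splits_iAnd hlt (fun i => (ih i p ((rank_le_rank_iAnd f i).trans hr)).2 (h i)) ?_
    exact fun i B v => by rw [sat_nnfNeg, not_not]
  | iOr I f ih =>
    refine fun p hr => ⟨(fun | .qf h => splits_of_isQF h _ p),
      (fun | .qf h => splits_of_isQF (isQF_nnfNeg h) _ p | .disj _ _ _ lam' hlt h => ?_)⟩
    exact splits_iAnd hlt (fun i => (ih i p ((rank_le_rank_iOr f i).trans hr)).1 (h i))
      fun i B v => sat_nnfNeg _ _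
  | _ =>
    exact fun p _ => ⟨(fun | .qf h => splits_of_isQF h _ p),
      (fun | .qf h => splits_of_isQF (isQF_nnfNeg h) _ p)⟩

end SumLike

section Equivalence

variable {τ : Vocab} {lam : Ordinal} {μ : Cardinal}

def TSigmaEquiv (lam : Ordinal) (μ : Cardinal) (A B : Struc τ) : Prop :=
  ∀ φ : Formula τ 0, TSigmaInf τ lam φ → rank φ ≤ μ → (Sat A φ emptyA ↔ Sat B φ emptyA)

def TPiEquiv (lam : Ordinal) (μ : Cardinal) (A B : Struc τ) : Prop :=
  ∀ φ : Formula τ 0, TPiInf τ lam φ → rank φ ≤ μ → (Sat A φ emptyA ↔ Sat B φ emptyA)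

theorem tSigmaEquiv_iff_tPiEquiv {A B : Struc τ} :
    TSigmaEquiv lam μ A B ↔ TPiEquiv lam μ A B := by
  constructor
  · intro h φ ⟨κ, hκ, hφ⟩ hr
    simpa only [sat_nnfNeg, not_iff_not] using
      h (nnfNeg φ) ⟨κ, hκ, hφ.nnfNeg⟩ ((rank_nnfNeg φ).trans_le hr)
  · intro h φ ⟨κ, hκ, hφ⟩ hr
    simpa only [sat_nnfNeg, not_iff_not] using
      h (nnfNeg φ) ⟨κ, hκ, hφ.nnfNeg⟩ ((rank_nnfNeg φ).trans_le hr)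

theorem TSigmaEquiv.sumLike (Ξ : QFInterp (annotV τ) τ) {A₁ A₁' A₂ A₂' : Struc τ}
    (h₁ : TSigmaEquiv lam μ A₁ A₁') (h₂ : TSigmaEquiv lam μ A₂ A₂') :
    TSigmaEquiv lam μ (sumLike Ξ A₁ A₂) (sumLike Ξ A₁' A₂') := by
  rintro φ ⟨κ, -, hφ⟩ hr
  obtain ⟨D, hD, hrep⟩ :=
    (splits_of_tSigma_of_tPi (Ξ := Ξ) φ (Fin.elim0 : Fin 0 → Fin 0 ⊕ Fin 0) hr).1 hφ
  rw [hrep A₁ A₂ emptyA emptyA emptyA (funext fun i => i.elim0),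
    hrep A₁' A₂' emptyA emptyA emptyA (funext fun i => i.elim0)]
  exact D.holds_congr hD (fun ψ hψ => h₁ ψ hψ.1 hψ.2) (fun ψ hψ => h₂ ψ hψ.1 hψ.2)

end Equivalence

/-- For L one of tΣ_{∞,λ}[μ] or tΠ_{∞,λ}[μ] over τ and ⊛ a quantifier-free
sum-like binary operation on τ-structures: if A₁, A₁' satisfy the same L sentences, and A₂, A₂'
satisfy the same L sentences, then A₁ ⊛ A₂ and A₁' ⊛ A₂' satisfy the same L sentences. -/
theorem stmt5 (τ : Vocab) [Fintype τ.Rel] (lam : Ordinal) (μ : Cardinal)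
    (Ξ : QFInterp (annotV τ) τ) (A₁ A₁' A₂ A₂' : Struc τ) :
    ((∀ φ : Formula τ 0, TSigmaInf τ lam φ → rank φ ≤ μ →
        (Sat A₁ φ emptyA ↔ Sat A₁' φ emptyA)) →
     (∀ φ : Formula τ 0, TSigmaInf τ lam φ → rank φ ≤ μ →
        (Sat A₂ φ emptyA ↔ Sat A₂' φ emptyA)) →
     ∀ φ : Formula τ 0, TSigmaInf τ lam φ → rank φ ≤ μ →
        (Sat (sumLike Ξ A₁ A₂) φ emptyA ↔ Sat (sumLike Ξ A₁' A₂') φ emptyA)) ∧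
    ((∀ φ : Formula τ 0, TPiInf τ lam φ → rank φ ≤ μ →
        (Sat A₁ φ emptyA ↔ Sat A₁' φ emptyA)) →
     (∀ φ : Formula τ 0, TPiInf τ lam φ → rank φ ≤ μ →
        (Sat A₂ φ emptyA ↔ Sat A₂' φ emptyA)) →
     ∀ φ : Formula τ 0, TPiInf τ lam φ → rank φ ≤ μ →
        (Sat (sumLike Ξ A₁ A₂) φ emptyA ↔ Sat (sumLike Ξ A₁' A₂') φ emptyA)) := by
  refine ⟨TSigmaEquiv.sumLike Ξ, fun h₁ h₂ => ?_⟩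
  exact tSigmaEquiv_iff_tPiEquiv.1 <|
    (tSigmaEquiv_iff_tPiEquiv.2 h₁).sumLike Ξ (tSigmaEquiv_iff_tPiEquiv.2 h₂)

end FV
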